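/- arXiv:2007.14628 — 3 statements merged into one kernel-verified Lean document; each statement's English description precedes it below -/
import Mathlib

section
/- Let f : ℝⁿ × ℝᵐ → ℝ be twice continuously differentiable, let A ∈ ℝ^{p×m} have rank p, and let d ∈ ℝᵖ. Suppose y : ℝⁿ → ℝᵐ is differentiable at x₀, satisfies the linear equality constraint A y(x) = d for all x in a neighborhood of x₀, and satisfies the stationarity condition that for every x in that neighborhood the gradient ∇_Y f(x, y(x)) lies in the range of Aᵀ (i.e., there exists λ(x) ∈ ℝᵖ with ∇_Y f(x, y(x)) = Aᵀ λ(x), the Lagrangian first-order condition for y(x) ∈ argmin_{u : Au = d} f(x, u)). Set H = ∇²_{YY} f(x₀, y(x₀)) and B = ∇²_{XY} f(x₀, y(x₀)). If H is symmetric positive definite, then Dy(x₀) = (H⁻¹ Aᵀ (A H⁻¹ Aᵀ)⁻¹ A H⁻¹ − H⁻¹) B. -/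
open Matrix Filter Topology

/-!
Differentiate both conditions at `x₀`. The constraint gives `A * Dy = 0`. The gradient
`x ↦ ∇_Y f (x, y x)` stays in the closed subspace `range Aᵀ`, hence so does its derivative,
which by the chain rule is `B + H * Dy`. So every column `u` of `Dy`, with `b` the matching
column of `B`, solves the KKT system `H u + b = Aᵀ μ`, `A u = 0`; since `H` and `A H⁻¹ Aᵀ` are
positive definite, hence invertible, eliminating `u` and then `μ` gives
`u = (H⁻¹ Aᵀ (A H⁻¹ Aᵀ)⁻¹ A H⁻¹ - H⁻¹) b`.
-/

section Calculus

variable {𝕜 E F G : Type*} [NontriviallyNormedField 𝕜] [NormedAddCommGroup E] [NormedSpace 𝕜 E]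
  [NormedAddCommGroup F] [NormedSpace 𝕜 F] [NormedAddCommGroup G] [NormedSpace 𝕜 G]

theorem ContDiff.differentiable_fderiv_snd {f : E × F → G} (hf : ContDiff 𝕜 2 f) :
    Differentiable 𝕜 fun z : E × F => fderiv 𝕜 (fun v => f (z.1, v)) z.2 := by
  have hpartial : (fun z : E × F => fderiv 𝕜 (fun v => f (z.1, v)) z.2)
      = fun z => (fderiv 𝕜 f z).comp (.inr 𝕜 E F) := by
    funext z
    exact ((hf.differentiable (by norm_num) z).hasFDerivAt.comp z.2
      (hasFDerivAt_prodMk_right z.1 z.2)).fderiv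
  rw [hpartial]
  exact ((hf.fderiv_right (m := 1) (by norm_num)).differentiable (by norm_num)).clm_comp
    (differentiable_const _)

theorem ContDiff.differentiable_gradient_snd {ι : Type*} [Fintype ι] [DecidableEq ι]
    {f : E × (ι → 𝕜) → 𝕜} (hf : ContDiff 𝕜 2 f) :
    Differentiable 𝕜 fun z : E × (ι → 𝕜) => fun i =>
      fderiv 𝕜 (fun v => f (z.1, v)) z.2 (Pi.single i 1) := fun z =>
  differentiableAt_pi.2 fun _ =>
    (hf.differentiable_fderiv_snd z).clm_apply (differentiableAt_const _)

theorem DifferentiableAt.hasFDerivAt_comp_graph {g : E → F → G} {y : E → F} {a : E}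
    (hg : DifferentiableAt 𝕜 (Function.uncurry g) (a, y a)) (hy : DifferentiableAt 𝕜 y a) :
    HasFDerivAt (fun x => g x (y x))
      (fderiv 𝕜 (fun x => g x (y a)) a + (fderiv 𝕜 (g a) (y a)).comp (fderiv 𝕜 y a)) a := by
  have hΓ := hg.hasFDerivAt
  set Γ := fderiv 𝕜 (Function.uncurry g) (a, y a)
  have hx : fderiv 𝕜 (fun x => g x (y a)) a = Γ.comp (.inl 𝕜 E F) :=
    (hΓ.comp a (hasFDerivAt_prodMk_left (𝕜 := 𝕜) a (y a)) :).fderiv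
  have hv : fderiv 𝕜 (g a) (y a) = Γ.comp (.inr 𝕜 E F) :=
    (hΓ.comp (y a) (hasFDerivAt_prodMk_right a (y a)) :).fderiv
  rw [hx, hv]
  refine (hΓ.comp a ((hasFDerivAt_id a).prodMk hy.hasFDerivAt)).congr_fderiv ?_
  ext v
  simp [← map_add]

theorem fderiv_apply_eq_mulVec {ι κ : Type*} [Fintype ι] [DecidableEq ι] [Fintype κ]
    {Φ : (ι → 𝕜) → κ → 𝕜} {x : ι → 𝕜} (hΦ : DifferentiableAt 𝕜 Φ x) {M : Matrix κ ι 𝕜}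
    (hM : ∀ i j, M i j = fderiv 𝕜 (fun z => Φ z i) x (Pi.single j 1)) (v : ι → 𝕜) :
    fderiv 𝕜 Φ x v = M *ᵥ v := by
  have hM' : M = LinearMap.toMatrix' (fderiv 𝕜 Φ x : (ι → 𝕜) →ₗ[𝕜] κ → 𝕜) := by
    ext i j
    rw [hM, fderiv_apply hΦ, LinearMap.toMatrix'_apply]
    rfl
  rw [hM', LinearMap.toMatrix'_mulVec]
  rfl

end Calculus

theorem HasFDerivAt.apply_mem_of_eventually_mem {E F : Type*} [NormedAddCommGroup E]
    [NormedSpace ℝ E] [NormedAddCommGroup F] [NormedSpace ℝ F] {f : E → F} {f' : E →L[ℝ] F}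
    {x : E} {S : Submodule ℝ F} (hS : IsClosed (S : Set F)) (hf : HasFDerivAt f f' x)
    (hmem : ∀ᶠ z in 𝓝 x, f z ∈ S) (v : E) : f' v ∈ S := by
  have hshift : Tendsto (fun c : ℝ => x + c⁻¹ • v) atTop (𝓝 x) := by
    simpa using ((tendsto_inv_atTop_zero (𝕜 := ℝ)).smul_const v).const_add x
  refine hS.mem_of_tendsto (hf.lim_real v) ?_
  filter_upwards [hshift.eventually hmem] with c hc
  exact S.smul_mem c (S.sub_mem hc hmem.self_of_nhds)

namespace Matrix

variable {m p R : Type*} [Fintype m] [DecidableEq m] [Fintype p]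

theorem linearIndependent_rows_of_rank_eq_card {n : Type*} [Fintype n] [Field R]
    {A : Matrix p n R} (hA : A.rank = Fintype.card p) : LinearIndependent R A.row := by
  rw [linearIndependent_iff_card_eq_finrank_span, Set.finrank, ← rank_eq_finrank_span_row, hA]

theorem PosDef.mul_inv_mul_transpose {H : Matrix m m ℝ} (hH : H.PosDef) {A : Matrix p m ℝ}
    (hA : LinearIndependent ℝ A.row) : (A * H⁻¹ * Aᵀ).PosDef := by
  simpa [conjTranspose_eq_transpose_of_trivial] using
    hH.inv.mul_mul_conjTranspose_same (B := A) (vecMul_injective_iff.2 hA)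

theorem eq_mulVec_of_kkt [DecidableEq p] [CommRing R] {H : Matrix m m R} {A : Matrix p m R}
    (hH : IsUnit H.det) (hK : IsUnit (A * H⁻¹ * Aᵀ).det) {u b : m → R} {μ : p → R}
    (hstat : b + H *ᵥ u = Aᵀ *ᵥ μ) (hfeas : A *ᵥ u = 0) :
    u = (H⁻¹ * Aᵀ * (A * H⁻¹ * Aᵀ)⁻¹ * A * H⁻¹ - H⁻¹) *ᵥ b := by
  have hu : u = H⁻¹ *ᵥ (Aᵀ *ᵥ μ) - H⁻¹ *ᵥ b := by
    rw [← hstat, mulVec_add, mulVec_mulVec, nonsing_inv_mul _ hH, one_mulVec]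
    abel
  have hμ : μ = (A * H⁻¹ * Aᵀ)⁻¹ *ᵥ (A *ᵥ (H⁻¹ *ᵥ b)) := by
    rw [hu, mulVec_sub, sub_eq_zero, mulVec_mulVec, mulVec_mulVec] at hfeas
    rw [← hfeas, mulVec_mulVec, nonsing_inv_mul _ hK, one_mulVec]
  rw [hu, hμ]
  simp only [sub_mulVec, mulVec_mulVec, Matrix.mul_assoc]

end Matrix

/-- **Lemma 2 (equality-constrained declarative layer derivative).**
Let `f : ℝⁿ × ℝᵐ → ℝ` be twice continuously differentiable, `A ∈ ℝ^{p×m}` with rank `p`,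
and `d ∈ ℝᵖ`. Suppose `y : ℝⁿ → ℝᵐ` is differentiable at `x₀`, satisfies `A (y x) = d`
for all `x` near `x₀`, and satisfies the Lagrangian first-order condition
`∇_Y f (x, y x) = Aᵀ λ(x)` for some `λ(x)`, for all `x` near `x₀`. Set
`H = ∇²_{YY} f (x₀, y x₀)` and `B = ∇²_{XY} f (x₀, y x₀)`. If `H` is symmetric positive
definite then `Dy(x₀) = (H⁻¹ Aᵀ (A H⁻¹ Aᵀ)⁻¹ A H⁻¹ - H⁻¹) B`. -/
theorem constrained_declarative_derivative
    {n m p : ℕ}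
    (f : (Fin n → ℝ) × (Fin m → ℝ) → ℝ)
    (hf : ContDiff ℝ 2 f)
    (A : Matrix (Fin p) (Fin m) ℝ)
    (hA : A.rank = p)
    (d : Fin p → ℝ)
    (y : (Fin n → ℝ) → (Fin m → ℝ))
    (x₀ : Fin n → ℝ)
    (hy : DifferentiableAt ℝ y x₀)
    -- `g x u` is the gradient of `f` with respect to its second argument: `∇_Y f (x, u)`
    (g : (Fin n → ℝ) → (Fin m → ℝ) → (Fin m → ℝ))
    (hg : ∀ x u i, g x u i = fderiv ℝ (fun v => f (x, v)) u (Pi.single i 1))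
    -- the linear equality constraint holds in a neighborhood of `x₀`
    (hconstraint : ∀ᶠ x in nhds x₀, A.mulVec (y x) = d)
    -- Lagrangian first-order stationarity: `∇_Y f (x, y x) ∈ range Aᵀ` near `x₀`
    (hstat : ∀ᶠ x in nhds x₀, ∃ lam : Fin p → ℝ, g x (y x) = Matrix.mulVec Aᵀ lam)
    -- `H = ∇²_{YY} f (x₀, y x₀)`
    (H : Matrix (Fin m) (Fin m) ℝ)
    (hH : ∀ i j, H i j = fderiv ℝ (fun v => g x₀ v i) (y x₀) (Pi.single j 1))
    -- `B = ∇²_{XY} f (x₀, y x₀)`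
    (B : Matrix (Fin m) (Fin n) ℝ)
    (hB : ∀ i j, B i j = fderiv ℝ (fun x => g x (y x₀) i) x₀ (Pi.single j 1))
    (hHpd : H.PosDef) :
    ∀ i j, fderiv ℝ y x₀ (Pi.single j 1) i
      = ((H⁻¹ * Aᵀ * (A * H⁻¹ * Aᵀ)⁻¹ * A * H⁻¹ - H⁻¹) * B) i j := by
  intro i j
  have hg_diff : Differentiable ℝ (Function.uncurry g) := by
    convert hf.differentiable_gradient_snd using 1
    funext z i
    exact hg z.1 z.2 i
  have hH_mulVec : ∀ v, fderiv ℝ (g x₀) (y x₀) v = H *ᵥ v :=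
    fderiv_apply_eq_mulVec
      ((hg_diff _).comp (y x₀) ((differentiableAt_const x₀).prodMk differentiableAt_id)) hH
  have hB_mulVec : ∀ v, fderiv ℝ (fun x => g x (y x₀)) x₀ v = B *ᵥ v :=
    fderiv_apply_eq_mulVec
      ((hg_diff _).comp x₀ (differentiableAt_id.prodMk (differentiableAt_const _))) hB
  set e : Fin n → ℝ := Pi.single j 1
  have hfeas : A *ᵥ fderiv ℝ y x₀ e = 0 := by
    refine (hy.hasFDerivAt.sub_const (y x₀)).apply_mem_of_eventually_mem
      (S := LinearMap.ker A.mulVecLin) (Submodule.closed_of_finiteDimensional _) ?_ e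
    filter_upwards [hconstraint] with x hx
    simp [mulVec_sub, hx, hconstraint.self_of_nhds]
  obtain ⟨μ, hμ⟩ : B *ᵥ e + H *ᵥ fderiv ℝ y x₀ e ∈ LinearMap.range Aᵀ.mulVecLin := by
    have := ((hg_diff _).hasFDerivAt_comp_graph hy).apply_mem_of_eventually_mem
      (S := LinearMap.range Aᵀ.mulVecLin) (Submodule.closed_of_finiteDimensional _)
      (hstat.mono fun x ⟨lam, h⟩ => ⟨lam, h.symm⟩) e
    simpa [hH_mulVec, hB_mulVec] using this
  have hAK : (A * H⁻¹ * Aᵀ).PosDef :=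
    hHpd.mul_inv_mul_transpose (linearIndependent_rows_of_rank_eq_card (by simpa using hA))
  rw [eq_mulVec_of_kkt hHpd.det_pos.ne'.isUnit hAK.det_pos.ne'.isUnit hμ.symm hfeas,
    mulVec_mulVec]
  simp [e]
end

section
/- Let r ∈ ℝᵐ and c ∈ ℝⁿ have strictly positive entries with Σᵢ rᵢ = 1 and Σⱼ cⱼ = 1, let M ∈ ℝ^{m×n}, and let μ > 0. Define f(P) = Σ_{ij} (M_{ij} P_{ij} + μ P_{ij}(log P_{ij} − 1)), with the convention that P_{ij}(log P_{ij} − 1) = 0 when P_{ij} = 0. Then f is continuous on the transport polytope U(r, c) and attains its minimum over U(r, c) at a unique matrix P*. -/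
/-- Strict convexity of the per-entry objective `t ↦ K t + μ t (log t − 1)` on `[0,∞)`. -/
lemma entry_strictConvexOn (K μ : ℝ) (hμ : 0 < μ) :
    StrictConvexOn ℝ (Set.Ici (0:ℝ))
      (fun t => K * t + μ * (t * (Real.log t - 1))) := by
  refine ⟨convex_Ici 0, ?_⟩
  intro x hx y hy hxy a b ha hb hab
  have key := Real.strictConvexOn_mul_log.2 hx hy hxy ha hb hab
  simp only [smul_eq_mul] at key ⊢
  nlinarith [mul_lt_mul_of_pos_left key hμ]

/-- The entropy-regularized optimal transport objective
`f(P) = Σᵢⱼ (Mᵢⱼ Pᵢⱼ + μ Pᵢⱼ (log Pᵢⱼ − 1))` (with `Pᵢⱼ (log Pᵢⱼ − 1) = 0` when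
`Pᵢⱼ = 0`, which holds automatically since `Real.log 0 = 0`) is continuous on the
transport polytope `U(r, c)` and attains its minimum there at a unique matrix `P*`. -/
theorem sinkhorn_objective_unique_minimizer
    {m n : ℕ}
    (r : Fin m → ℝ) (c : Fin n → ℝ)
    (hr : ∀ i, 0 < r i) (hc : ∀ j, 0 < c j)
    (hrsum : ∑ i, r i = 1) (hcsum : ∑ j, c j = 1)
    (M : Matrix (Fin m) (Fin n) ℝ)
    (μ : ℝ) (hμ : 0 < μ)
    (U : Set (Matrix (Fin m) (Fin n) ℝ))
    (hU : U = {P | (∀ i j, 0 ≤ P i j) ∧ (∀ i, ∑ j, P i j = r i) ∧ (∀ j, ∑ i, P i j = c j)})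
    (f : Matrix (Fin m) (Fin n) ℝ → ℝ)
    (hf : ∀ P, f P = ∑ i, ∑ j, (M i j * P i j + μ * (P i j * (Real.log (P i j) - 1)))) :
    ContinuousOn f U ∧ ∃! P, P ∈ U ∧ ∀ Q ∈ U, f P ≤ f Q := by
  -- continuity of f everywhere
  have hfe : f = fun P => ∑ i, ∑ j,
      (M i j * P i j + μ * (P i j * (Real.log (P i j) - 1))) := funext hf
  have heval : ∀ (i : Fin m) (j : Fin n),
      Continuous fun P : Matrix (Fin m) (Fin n) ℝ => P i j := fun i j =>
    (continuous_apply j).comp (continuous_apply i)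
  have hml : Continuous fun x : ℝ => x * (Real.log x - 1) := by
    have h : (fun x : ℝ => x * (Real.log x - 1)) = fun x => x * Real.log x - x := by
      funext x; ring
    rw [h]; exact Real.continuous_mul_log.sub continuous_id
  have hfc : Continuous f := by
    rw [hfe]
    apply continuous_finset_sum; intro i _
    apply continuous_finset_sum; intro j _
    exact (continuous_const.mul (heval i j)).add
      (continuous_const.mul (hml.comp (heval i j)))
  refine ⟨hfc.continuousOn, ?_⟩
  -- the nonnegative orthant
  set S : Set (Matrix (Fin m) (Fin n) ℝ) := {P | ∀ i j, 0 ≤ P i j} with hS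
  have hSconv : Convex ℝ S := by
    intro x hx y hy a b ha hb hab i j
    have : (a • x + b • y) i j = a * x i j + b * y i j := by
      simp [Matrix.add_apply, Matrix.smul_apply, smul_eq_mul]
    rw [this]
    exact add_nonneg (mul_nonneg ha (hx i j)) (mul_nonneg hb (hy i j))
  -- strict convexity of f on S
  have hsc : StrictConvexOn ℝ S f := by
    refine ⟨hSconv, ?_⟩
    intro x hx y hy hxy a b ha hb hab
    simp only [hfe]
    have hsum : ∀ P : Matrix (Fin m) (Fin n) ℝ,
        (∑ i, ∑ j, (M i j * P i j + μ * (P i j * (Real.log (P i j) - 1)))) =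
          ∑ p : Fin m × Fin n, (M p.1 p.2 * P p.1 p.2 +
            μ * (P p.1 p.2 * (Real.log (P p.1 p.2) - 1))) := fun P =>
      (Fintype.sum_prod_type (f := fun p : Fin m × Fin n =>
        M p.1 p.2 * P p.1 p.2 + μ * (P p.1 p.2 * (Real.log (P p.1 p.2) - 1)))).symm
    rw [hsum, hsum, hsum]
    simp only [smul_eq_mul]
    rw [Finset.mul_sum, Finset.mul_sum, ← Finset.sum_add_distrib]
    have happ : ∀ (i : Fin m) (j : Fin n), (a • x + b • y) i j = a * x i j + b * y i j := by
      intro i j; simp [Matrix.add_apply, Matrix.smul_apply, smul_eq_mul]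
    obtain ⟨p0, hp0⟩ : ∃ p : Fin m × Fin n, x p.1 p.2 ≠ y p.1 p.2 := by
      by_contra h
      push_neg at h
      exact hxy (by ext i j; exact h (i, j))
    apply Finset.sum_lt_sum
    · intro p _
      have h := (entry_strictConvexOn (M p.1 p.2) μ hμ).convexOn.2
        (hx p.1 p.2) (hy p.1 p.2) ha.le hb.le hab
      simp only [smul_eq_mul] at h
      rw [happ]
      exact h
    · refine ⟨p0, Finset.mem_univ _, ?_⟩
      have h := (entry_strictConvexOn (M p0.1 p0.2) μ hμ).2
        (hx p0.1 p0.2) (hy p0.1 p0.2) hp0 ha hb hab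
      simp only [smul_eq_mul] at h
      rw [happ]
      exact h
  -- U is a subset of S
  have hUS : U ⊆ S := by
    intro P hP; rw [hU] at hP; exact hP.1
  -- U is convex
  have hUconv : Convex ℝ U := by
    rw [hU]
    intro x hx y hy a b ha hb hab
    refine ⟨fun i j => ?_, fun i => ?_, fun j => ?_⟩
    · have : (a • x + b • y) i j = a * x i j + b * y i j := by
        simp [Matrix.add_apply, Matrix.smul_apply, smul_eq_mul]
      rw [this]
      exact add_nonneg (mul_nonneg ha (hx.1 i j)) (mul_nonneg hb (hy.1 i j))
    · simp only [Matrix.add_apply, Matrix.smul_apply, smul_eq_mul,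
        Finset.sum_add_distrib, ← Finset.mul_sum, hx.2.1 i, hy.2.1 i]
      linear_combination (r i) * hab
    · simp only [Matrix.add_apply, Matrix.smul_apply, smul_eq_mul,
        Finset.sum_add_distrib, ← Finset.mul_sum, hx.2.2 j, hy.2.2 j]
      linear_combination (c j) * hab
  -- U is closed
  have hUclosed : IsClosed U := by
    rw [hU]
    have h1 : IsClosed {P : Matrix (Fin m) (Fin n) ℝ | ∀ i j, 0 ≤ P i j} := by
      have e : {P : Matrix (Fin m) (Fin n) ℝ | ∀ i j, 0 ≤ P i j} =
          ⋂ i, ⋂ j, {P : Matrix (Fin m) (Fin n) ℝ | 0 ≤ P i j} := by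
        ext P; simp [Set.mem_iInter]
      rw [e]
      exact isClosed_iInter fun i => isClosed_iInter fun j =>
        isClosed_le continuous_const (heval i j)
    have h2 : IsClosed {P : Matrix (Fin m) (Fin n) ℝ | ∀ i, ∑ j, P i j = r i} := by
      have e : {P : Matrix (Fin m) (Fin n) ℝ | ∀ i, ∑ j, P i j = r i} =
          ⋂ i, {P : Matrix (Fin m) (Fin n) ℝ | ∑ j, P i j = r i} := by
        ext P; simp [Set.mem_iInter]
      rw [e]
      exact isClosed_iInter fun i =>
        isClosed_eq (continuous_finset_sum _ fun j _ => heval i j) continuous_const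
    have h3 : IsClosed {P : Matrix (Fin m) (Fin n) ℝ | ∀ j, ∑ i, P i j = c j} := by
      have e : {P : Matrix (Fin m) (Fin n) ℝ | ∀ j, ∑ i, P i j = c j} =
          ⋂ j, {P : Matrix (Fin m) (Fin n) ℝ | ∑ i, P i j = c j} := by
        ext P; simp [Set.mem_iInter]
      rw [e]
      exact isClosed_iInter fun j =>
        isClosed_eq (continuous_finset_sum _ fun i _ => heval i j) continuous_const
    exact (h1.inter (h2.inter h3))
  -- U is compact
  have hUcpt : IsCompact U := by
    have hK : IsCompact (Set.univ.pi fun _ : Fin m =>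
        (Set.univ.pi fun _ : Fin n => Set.Icc (0:ℝ) 1)) :=
      isCompact_univ_pi fun _ => isCompact_univ_pi fun _ => isCompact_Icc
    refine hK.of_isClosed_subset hUclosed ?_
    intro P hP
    rw [hU] at hP
    obtain ⟨h0, hrow, _⟩ := hP
    intro i _ j _
    refine ⟨h0 i j, ?_⟩
    have h1 : P i j ≤ ∑ j', P i j' :=
      Finset.single_le_sum (fun j' _ => h0 i j') (Finset.mem_univ j)
    have h2 : r i ≤ ∑ i', r i' :=
      Finset.single_le_sum (fun i' _ => (hr i').le) (Finset.mem_univ i)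
    rw [hrow i] at h1
    rw [hrsum] at h2
    linarith
  -- U is nonempty
  have hUne : U.Nonempty := by
    refine ⟨fun i j => r i * c j, ?_⟩
    rw [hU]
    refine ⟨fun i j => mul_nonneg (hr i).le (hc j).le, fun i => ?_, fun j => ?_⟩
    · rw [← Finset.mul_sum, hcsum, mul_one]
    · rw [← Finset.sum_mul, hrsum, one_mul]
  -- existence of a minimizer
  obtain ⟨P, hPU, hPmin⟩ := hUcpt.exists_isMinOn hUne hfc.continuousOn
  refine ⟨P, ⟨hPU, fun Q hQ => hPmin hQ⟩, ?_⟩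
  -- uniqueness
  rintro Q ⟨hQU, hQmin⟩
  by_contra hne
  have hmid : (1/2 : ℝ) • Q + (1/2 : ℝ) • P ∈ U :=
    hUconv hQU hPU (by norm_num) (by norm_num) (by norm_num)
  have hstrict := hsc.2 (hUS hQU) (hUS hPU) hne
    (by norm_num : (0:ℝ) < 1/2) (by norm_num : (0:ℝ) < 1/2) (by norm_num)
  have hfPQ : f P = f Q := le_antisymm (hPmin hQU) (hQmin P hPU)
  have h1 : f P ≤ f ((1/2 : ℝ) • Q + (1/2 : ℝ) • P) := hPmin hmid
  simp only [smul_eq_mul] at hstrict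
  rw [hfPQ] at h1
  linarith
end

section
/- Let r ∈ ℝᵐ and c ∈ ℝⁿ have strictly positive entries with Σᵢ rᵢ = 1 and Σⱼ cⱼ = 1, let M ∈ ℝ^{m×n}, and let μ > 0. Suppose P ∈ U(r, c) has all entries strictly positive and there exist vectors α ∈ ℝᵐ and β ∈ ℝⁿ such that μ log P_{ij} = −M_{ij} + αᵢ + βⱼ for all i, j. Then P is the unique minimizer of the entropy-regularized transport objective f(Q) = Σ_{ij} (M_{ij} Q_{ij} + μ Q_{ij}(log Q_{ij} − 1)) over Q ∈ U(r, c), where Q_{ij}(log Q_{ij} − 1) is taken to be 0 when Q_{ij} = 0. -/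
private lemma entropy_ineq {p q : ℝ} (hp : 0 < p) (hq : 0 ≤ q) :
    0 ≤ q * Real.log q - q * Real.log p - q + p := by
  rcases hq.eq_or_lt with h | h
  · simp [← h]; linarith
  · have hlog := Real.log_le_sub_one_of_pos (div_pos hp h)
    rw [Real.log_div hp.ne' h.ne'] at hlog
    have h1 : q * (Real.log p - Real.log q) ≤ q * (p / q - 1) :=
      mul_le_mul_of_nonneg_left hlog h.le
    have h2 : q * (p / q) = p := by field_simp
    nlinarith

private lemma entropy_ineq_strict {p q : ℝ} (hp : 0 < p) (hq : 0 ≤ q) (hne : q ≠ p) :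
    0 < q * Real.log q - q * Real.log p - q + p := by
  rcases hq.eq_or_lt with h | h
  · simp [← h]; linarith
  · have hd1 : p / q ≠ 1 := fun hh => hne ((div_eq_one_iff_eq h.ne').mp hh).symm
    have hlog := Real.log_lt_sub_one_of_pos (div_pos hp h) hd1
    rw [Real.log_div hp.ne' h.ne'] at hlog
    have h1 : q * (Real.log p - Real.log q) < q * (p / q - 1) :=
      (mul_lt_mul_iff_right₀ h).mpr hlog
    have h2 : q * (p / q) = p := by field_simp
    nlinarith

/-- **Sufficiency of the Lagrangian first-order condition for the Sinkhorn problem.**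
If `P ∈ U(r, c)` has strictly positive entries and `μ log Pᵢⱼ = −Mᵢⱼ + αᵢ + βⱼ` for
some `α ∈ ℝᵐ`, `β ∈ ℝⁿ`, then `P` is the unique minimizer of the entropy-regularized
transport objective `f(Q) = Σᵢⱼ (Mᵢⱼ Qᵢⱼ + μ Qᵢⱼ (log Qᵢⱼ − 1))` over `U(r, c)`
(where `Qᵢⱼ (log Qᵢⱼ − 1) = 0` when `Qᵢⱼ = 0`, as holds automatically since
`Real.log 0 = 0`). -/
theorem sinkhorn_first_order_condition_sufficient
    {m n : ℕ}
    (r : Fin m → ℝ) (c : Fin n → ℝ)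
    (hr : ∀ i, 0 < r i) (hc : ∀ j, 0 < c j)
    (hrsum : ∑ i, r i = 1) (hcsum : ∑ j, c j = 1)
    (M : Matrix (Fin m) (Fin n) ℝ)
    (μ : ℝ) (hμ : 0 < μ)
    (U : Set (Matrix (Fin m) (Fin n) ℝ))
    (hU : U = {Q | (∀ i j, 0 ≤ Q i j) ∧ (∀ i, ∑ j, Q i j = r i) ∧ (∀ j, ∑ i, Q i j = c j)})
    (f : Matrix (Fin m) (Fin n) ℝ → ℝ)
    (hf : ∀ Q, f Q = ∑ i, ∑ j, (M i j * Q i j + μ * (Q i j * (Real.log (Q i j) - 1))))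
    (P : Matrix (Fin m) (Fin n) ℝ)
    (hPU : P ∈ U)
    (hPpos : ∀ i j, 0 < P i j)
    (α : Fin m → ℝ) (β : Fin n → ℝ)
    (hlagrange : ∀ i j, μ * Real.log (P i j) = -M i j + α i + β j) :
    (∀ Q ∈ U, f P ≤ f Q) ∧ ∀ Q ∈ U, Q ≠ P → f P < f Q := by
  subst hU
  obtain ⟨hP0, hPr, hPc⟩ := hPU
  -- general expansion of f on the polytope
  have expand : ∀ R : Matrix (Fin m) (Fin n) ℝ,
      (∀ i, ∑ j, R i j = r i) → (∀ j, ∑ i, R i j = c j) →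
      f R = (∑ i, α i * r i) + (∑ j, β j * c j)
          + μ * ∑ i, ∑ j, (R i j * Real.log (R i j) - R i j * Real.log (P i j)) - μ := by
    intro R hRr hRc
    have h1 : ∀ i j, M i j * R i j + μ * (R i j * (Real.log (R i j) - 1)) =
        α i * R i j + β j * R i j
        + μ * (R i j * Real.log (R i j) - R i j * Real.log (P i j)) - μ * R i j := by
      intro i j
      have hM : M i j = α i + β j - μ * Real.log (P i j) := by linarith [hlagrange i j]
      rw [hM]; ring
    have e1 : ∑ i, ∑ j, α i * R i j = ∑ i, α i * r i :=
      Finset.sum_congr rfl fun i _ => by rw [← Finset.mul_sum, hRr]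
    have e2 : ∑ i, ∑ j, β j * R i j = ∑ j, β j * c j := by
      rw [Finset.sum_comm]
      exact Finset.sum_congr rfl fun j _ => by rw [← Finset.mul_sum, hRc]
    have e3 : ∑ i, ∑ j, R i j = 1 := by
      rw [Finset.sum_congr rfl fun i _ => hRr i, hrsum]
    calc f R = ∑ i, ∑ j, (α i * R i j + β j * R i j
          + μ * (R i j * Real.log (R i j) - R i j * Real.log (P i j)) - μ * R i j) := by
          rw [hf]
          exact Finset.sum_congr rfl fun i _ => Finset.sum_congr rfl fun j _ => h1 i j
      _ = (∑ i, ∑ j, α i * R i j) + (∑ i, ∑ j, β j * R i j)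
          + μ * (∑ i, ∑ j, (R i j * Real.log (R i j) - R i j * Real.log (P i j)))
          - μ * (∑ i, ∑ j, R i j) := by
          simp only [Finset.sum_add_distrib, Finset.sum_sub_distrib, ← Finset.mul_sum]
      _ = _ := by rw [e1, e2, e3, mul_one]
  -- key difference formula
  have key : ∀ Q : Matrix (Fin m) (Fin n) ℝ,
      Q ∈ {Q : Matrix (Fin m) (Fin n) ℝ | (∀ i j, 0 ≤ Q i j) ∧ (∀ i, ∑ j, Q i j = r i) ∧
        (∀ j, ∑ i, Q i j = c j)} →
      f Q - f P = μ * ∑ i, ∑ j, (Q i j * Real.log (Q i j) - Q i j * Real.log (P i j)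
        - Q i j + P i j) := by
    intro Q hQ
    obtain ⟨hQ0, hQr, hQc⟩ := hQ
    have eQ := expand Q hQr hQc
    have eP := expand P hPr hPc
    have hTP : ∑ i, ∑ j, (P i j * Real.log (P i j) - P i j * Real.log (P i j)) = 0 := by
      simp
    have eQ3 : ∑ i, ∑ j, Q i j = 1 := by
      rw [Finset.sum_congr rfl fun i _ => hQr i, hrsum]
    have eP3 : ∑ i, ∑ j, P i j = 1 := by
      rw [Finset.sum_congr rfl fun i _ => hPr i, hrsum]
    have esum : ∑ i, ∑ j, (Q i j * Real.log (Q i j) - Q i j * Real.log (P i j)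
        - Q i j + P i j)
        = (∑ i, ∑ j, (Q i j * Real.log (Q i j) - Q i j * Real.log (P i j)))
          - (∑ i, ∑ j, Q i j) + (∑ i, ∑ j, P i j) := by
      simp only [Finset.sum_add_distrib, Finset.sum_sub_distrib]
    rw [esum, eQ3, eP3]
    rw [eQ, eP, hTP]
    ring
  constructor
  · intro Q hQ
    have h := key Q hQ
    obtain ⟨hQ0, -, -⟩ := hQ
    have hnn : 0 ≤ ∑ i, ∑ j, (Q i j * Real.log (Q i j) - Q i j * Real.log (P i j)
        - Q i j + P i j) :=
      Finset.sum_nonneg fun i _ => Finset.sum_nonneg fun j _ =>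
        entropy_ineq (hPpos i j) (hQ0 i j)
    nlinarith
  · intro Q hQ hne
    have h := key Q hQ
    obtain ⟨hQ0, -, -⟩ := hQ
    obtain ⟨i0, j0, hij⟩ : ∃ i j, Q i j ≠ P i j := by
      by_contra hcon
      push_neg at hcon
      exact hne (by funext i j; exact hcon i j)
    have hpos : 0 < ∑ i, ∑ j, (Q i j * Real.log (Q i j) - Q i j * Real.log (P i j)
        - Q i j + P i j) := by
      refine Finset.sum_pos' (fun i _ => Finset.sum_nonneg fun j _ =>
        entropy_ineq (hPpos i j) (hQ0 i j)) ⟨i0, Finset.mem_univ i0, ?_⟩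
      refine Finset.sum_pos' (fun j _ => entropy_ineq (hPpos i0 j) (hQ0 i0 j))
        ⟨j0, Finset.mem_univ j0, entropy_ineq_strict (hPpos i0 j0) (hQ0 i0 j0) hij⟩
    nlinarith
end
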